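/- arXiv:0901.1107 — 2 statements merged into one kernel-verified Lean document; each statement's English description precedes it below -/
import Mathlib

section
/- Let A₁ and A₂ be nonnegative (positive semidefinite) operators on a finite-dimensional Hilbert space with null spaces L₁ and L₂ satisfying L₁ ∩ L₂ = {0}. Suppose no nonzero eigenvalue of A₁ or A₂ is smaller than v > 0. Then A₁ + A₂ ≥ v · 2 sin²(θ/2) as operators, where θ = θ(L₁, L₂) is the angle between L₁ and L₂, defined by cos θ = max { |⟨x, y⟩| : x ∈ L₁, y ∈ L₂, ‖x‖ = ‖y‖ = 1 }. -/
/-! If `A ≥ 0` has no nonzero eigenvalue below `v` and `k` is the component of `x` in `ker A`,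
then `re ⟪A x, x⟫ ≥ v ‖x - k‖²`. Hence `re ⟪(A₁ + A₂) x, x⟫ ≥ v (‖x - k₁‖² + ‖x - k₂‖²)` with
`kᵢ ∈ Lᵢ`. Since `|⟪k₁, k₂⟫| ≤ cos θ ‖k₁‖ ‖k₂‖`, we get `‖k₁ + k₂‖² ≤ (1 + cos θ) (‖k₁‖² + ‖k₂‖²)`,
and AM–GM turns this into `‖x - k₁‖² + ‖x - k₂‖² ≥ (1 - cos θ) ‖x‖² = 2 sin² (θ / 2) ‖x‖²`. -/

open scoped ComplexOrder InnerProductSpace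

section InnerProductSpace

variable {𝕜 E : Type*} [RCLike 𝕜] [NormedAddCommGroup E] [InnerProductSpace 𝕜 E]

lemma two_mul_mul_le_of_sq_le_mul {k t u s : ℝ} (hk : 0 < k) (h : u ^ 2 ≤ k * s) :
    2 * t * u ≤ k * t ^ 2 + s := by
  refine le_of_mul_le_mul_left ?_ hk
  nlinarith [sq_nonneg (k * t - u)]

lemma norm_add_sq_le_of_norm_inner_le {c : ℝ} (hc : 0 ≤ c) {a b : E}
    (hab : ‖⟪a, b⟫_𝕜‖ ≤ c * (‖a‖ * ‖b‖)) :
    ‖a + b‖ ^ 2 ≤ (1 + c) * (‖a‖ ^ 2 + ‖b‖ ^ 2) := by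
  have hre : RCLike.re ⟪a, b⟫_𝕜 ≤ c * (‖a‖ * ‖b‖) := (RCLike.re_le_norm _).trans hab
  rw [@norm_add_sq 𝕜]
  nlinarith [mul_nonneg hc (sq_nonneg (‖a‖ - ‖b‖))]

lemma one_sub_mul_norm_sq_le_norm_sub_sq_add_norm_sub_sq {c : ℝ} (hc : 0 ≤ c) (x : E) {a b : E}
    (hab : ‖⟪a, b⟫_𝕜‖ ≤ c * (‖a‖ * ‖b‖)) :
    (1 - c) * ‖x‖ ^ 2 ≤ ‖x - a‖ ^ 2 + ‖x - b‖ ^ 2 := by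
  have hsum : RCLike.re ⟪x, a + b⟫_𝕜 ≤ ‖x‖ * ‖a + b‖ := re_inner_le_norm x (a + b)
  have hamgm := two_mul_mul_le_of_sq_le_mul (by linarith : (0 : ℝ) < 1 + c) (t := ‖x‖)
    (norm_add_sq_le_of_norm_inner_le hc hab)
  rw [@norm_sub_sq 𝕜, @norm_sub_sq 𝕜]
  rw [inner_add_right, map_add] at hsum
  nlinarith

namespace Submodule

/-- `cos θ` for the angle `θ` between `L₁` and `L₂`; it is `0` when one of them is `⊥`. -/
noncomputable def cosAngle (L₁ L₂ : Submodule 𝕜 E) : ℝ :=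
  sSup {t : ℝ | ∃ x ∈ L₁, ∃ y ∈ L₂, ‖x‖ = 1 ∧ ‖y‖ = 1 ∧ t = ‖(inner 𝕜 x y : 𝕜)‖}

variable (L₁ L₂ : Submodule 𝕜 E)

lemma cosAngle_nonneg : 0 ≤ L₁.cosAngle L₂ :=
  Real.sSup_nonneg <| by rintro t ⟨x, -, y, -, -, -, rfl⟩; positivity

lemma bddAbove_cosAngle_set : BddAbove
    {t : ℝ | ∃ x ∈ L₁, ∃ y ∈ L₂, ‖x‖ = 1 ∧ ‖y‖ = 1 ∧ t = ‖(inner 𝕜 x y : 𝕜)‖} :=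
  ⟨1, by
    rintro t ⟨x, -, y, -, hx, hy, rfl⟩
    simpa [hx, hy] using norm_inner_le_norm (𝕜 := 𝕜) x y⟩

variable {L₁ L₂}

lemma norm_inner_le_cosAngle_mul {a b : E} (ha : a ∈ L₁) (hb : b ∈ L₂) :
    ‖⟪a, b⟫_𝕜‖ ≤ L₁.cosAngle L₂ * (‖a‖ * ‖b‖) := by
  rcases eq_or_ne a 0 with rfl | ha0
  · simp
  rcases eq_or_ne b 0 with rfl | hb0
  · simp
  have hpos : 0 < ‖a‖ * ‖b‖ := by positivity
  rw [← div_le_iff₀ hpos]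
  refine le_csSup (bddAbove_cosAngle_set L₁ L₂) ⟨(‖a‖⁻¹ : 𝕜) • a, L₁.smul_mem _ ha,
    (‖b‖⁻¹ : 𝕜) • b, L₂.smul_mem _ hb, norm_smul_inv_norm ha0, norm_smul_inv_norm hb0, ?_⟩
  rw [inner_smul_left, inner_smul_right, norm_mul, norm_mul, RCLike.norm_conj]
  simp only [norm_inv, norm_algebraMap', norm_norm]
  field_simp

end Submodule

lemma LinearMap.IsSymmetric.isPositive_sub_smul_one {T : E →ₗ[𝕜] E} (hT : T.IsSymmetric) {r : ℝ}
    (h : ∀ x, r * ‖x‖ ^ 2 ≤ RCLike.re ⟪T x, x⟫_𝕜) : (T - (r : 𝕜) • 1).IsPositive := by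
  refine ⟨hT.sub (LinearMap.IsSymmetric.one.smul (RCLike.conj_ofReal r)), fun x => ?_⟩
  rw [LinearMap.sub_apply, inner_sub_left, map_sub, LinearMap.smul_apply, inner_smul_left,
    Module.End.one_apply, RCLike.conj_ofReal, inner_self_eq_norm_sq_to_K]
  rw [← RCLike.ofReal_pow, ← RCLike.ofReal_mul, RCLike.ofReal_re, sub_nonneg]
  exact h x

variable {ι : Type*} [Fintype ι]

lemma OrthonormalBasis.norm_sum_smul_sq (b : OrthonormalBasis ι 𝕜 E) (f : ι → 𝕜) :
    ‖∑ i, f i • b i‖ ^ 2 = ∑ i, ‖f i‖ ^ 2 := by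
  rw [b.sum_repr_symm (WithLp.toLp 2 f), LinearIsometryEquiv.norm_map, EuclideanSpace.norm_sq_eq]

lemma OrthonormalBasis.re_inner_sum_mul_smul_sum_smul (b : OrthonormalBasis ι 𝕜 E) (μ : ι → ℝ)
    (f : ι → 𝕜) :
    RCLike.re ⟪∑ i, ((μ i : 𝕜) * f i) • b i, ∑ i, f i • b i⟫_𝕜 = ∑ i, μ i * ‖f i‖ ^ 2 := by
  rw [b.orthonormal.inner_sum, map_sum]
  refine Finset.sum_congr rfl fun i _ => ?_
  rw [map_mul (starRingEnd 𝕜), RCLike.conj_ofReal, mul_assoc, RCLike.conj_mul,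
    ← RCLike.ofReal_pow, RCLike.re_ofReal_mul, RCLike.ofReal_re]

lemma exists_mem_ker_mul_norm_sub_sq_le_re_inner {T : E →ₗ[𝕜] E} (b : OrthonormalBasis ι 𝕜 E)
    {μ : ι → ℝ} (hb : ∀ i, T (b i) = (μ i : 𝕜) • b i) {v : ℝ} (hμ : ∀ i, μ i = 0 ∨ v ≤ μ i)
    (x : E) : ∃ k ∈ LinearMap.ker T, v * ‖x - k‖ ^ 2 ≤ RCLike.re ⟪T x, x⟫_𝕜 := by
  classical
  set f : ι → 𝕜 := fun i => b.repr x i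
  set g : ι → 𝕜 := fun i => if μ i = 0 then 0 else f i
  have hx : x = ∑ i, f i • b i := (b.sum_repr x).symm
  refine ⟨∑ i, (f i - g i) • b i, ?_, ?_⟩
  · simp only [LinearMap.mem_ker, map_sum, map_smul, hb]
    refine Finset.sum_eq_zero fun i _ => ?_
    by_cases h : μ i = 0 <;> simp [g, h]
  have hxk : x - ∑ i, (f i - g i) • b i = ∑ i, g i • b i := by
    conv_lhs => rw [hx]
    simp only [sub_smul, Finset.sum_sub_distrib, sub_sub_cancel]
  have hTx : T x = ∑ i, ((μ i : 𝕜) * f i) • b i := by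
    conv_lhs => rw [hx]
    simp only [map_sum, map_smul, hb, smul_smul, mul_comm]
  rw [hxk, b.norm_sum_smul_sq, hTx, hx, b.re_inner_sum_mul_smul_sum_smul, Finset.mul_sum]
  refine Finset.sum_le_sum fun i _ => ?_
  by_cases h0 : μ i = 0
  · simp [g, h0]
  · simp only [g, if_neg h0]
    exact mul_le_mul_of_nonneg_right ((hμ i).resolve_left h0) (sq_nonneg _)

lemma Matrix.IsHermitian.toEuclideanLin_eigenvectorBasis [DecidableEq ι] {A : Matrix ι ι 𝕜}
    (hA : A.IsHermitian) (i : ι) :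
    A.toEuclideanLin (hA.eigenvectorBasis i) = (hA.eigenvalues i : 𝕜) • hA.eigenvectorBasis i := by
  rw [← RCLike.real_smul_eq_coe_smul (K := 𝕜)]
  exact congrArg (WithLp.toLp 2) (hA.mulVec_eigenvectorBasis i)

end InnerProductSpace

theorem stmt0_general (d : ℕ) (A₁ A₂ : Matrix (Fin d) (Fin d) ℂ)
    (h₁ : A₁.PosSemidef) (h₂ : A₂.PosSemidef)
    (L₁ L₂ : Submodule ℂ (EuclideanSpace ℂ (Fin d)))
    (hL₁ : L₁ = LinearMap.ker (Matrix.toEuclideanLin A₁))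
    (hL₂ : L₂ = LinearMap.ker (Matrix.toEuclideanLin A₂))
    (v : ℝ) (hv : 0 < v)
    (hev₁ : ∀ i, h₁.1.eigenvalues i = 0 ∨ v ≤ h₁.1.eigenvalues i)
    (hev₂ : ∀ i, h₂.1.eigenvalues i = 0 ∨ v ≤ h₂.1.eigenvalues i)
    (θ : ℝ)
    (hθ : Real.cos θ = sSup {t : ℝ | ∃ x ∈ L₁, ∃ y ∈ L₂,
      ‖x‖ = 1 ∧ ‖y‖ = 1 ∧ t = ‖(inner ℂ x y : ℂ)‖}) :
    (A₁ + A₂ - (((v * (2 * Real.sin (θ / 2) ^ 2) : ℝ) : ℂ)) • 1).PosSemidef := by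
  have hcos : Real.cos θ = L₁.cosAngle L₂ := hθ
  have hsin : v * (2 * Real.sin (θ / 2) ^ 2) = v * (1 - L₁.cosAngle L₂) := by
    rw [Real.sin_sq_eq_half_sub, show 2 * (θ / 2) = θ by ring, hcos]
    ring
  rw [hsin, ← Matrix.isPositive_toEuclideanLin_iff, map_sub, map_add, map_smul,
    Matrix.toLpLin_one, ← Module.End.one_eq_id]
  have hsymm : (A₁.toEuclideanLin + A₂.toEuclideanLin).IsSymmetric := by
    rw [← map_add]
    exact Matrix.isSymmetric_toEuclideanLin_iff.mpr (h₁.1.add h₂.1)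
  refine hsymm.isPositive_sub_smul_one fun x => ?_
  obtain ⟨k₁, hk₁, hq₁⟩ := exists_mem_ker_mul_norm_sub_sq_le_re_inner _
    h₁.1.toEuclideanLin_eigenvectorBasis hev₁ x
  obtain ⟨k₂, hk₂, hq₂⟩ := exists_mem_ker_mul_norm_sub_sq_le_re_inner _
    h₂.1.toEuclideanLin_eigenvectorBasis hev₂ x
  have hgeom := one_sub_mul_norm_sq_le_norm_sub_sq_add_norm_sub_sq (L₁.cosAngle_nonneg L₂) x
    (Submodule.norm_inner_le_cosAngle_mul (hL₁ ▸ hk₁) (hL₂ ▸ hk₂))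
  change v * (1 - L₁.cosAngle L₂) * ‖x‖ ^ 2 ≤ _
  rw [LinearMap.add_apply, inner_add_left, map_add]
  nlinarith [mul_le_mul_of_nonneg_left hgeom hv.le]

/-- Lemma 14.4 of Kitaev: if A₁, A₂ are PSD with null spaces L₁, L₂ intersecting
trivially, and all nonzero eigenvalues are at least v, then
A₁ + A₂ ≥ 2 v sin²(θ/2) where θ is the angle between L₁ and L₂. -/
theorem stmt0 (d : ℕ) (A₁ A₂ : Matrix (Fin d) (Fin d) ℂ)
    (h₁ : A₁.PosSemidef) (h₂ : A₂.PosSemidef)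
    (L₁ L₂ : Submodule ℂ (EuclideanSpace ℂ (Fin d)))
    (hL₁ : L₁ = LinearMap.ker (Matrix.toEuclideanLin A₁))
    (hL₂ : L₂ = LinearMap.ker (Matrix.toEuclideanLin A₂))
    (htriv : L₁ ⊓ L₂ = ⊥)
    (v : ℝ) (hv : 0 < v)
    (hev₁ : ∀ i, h₁.1.eigenvalues i = 0 ∨ v ≤ h₁.1.eigenvalues i)
    (hev₂ : ∀ i, h₂.1.eigenvalues i = 0 ∨ v ≤ h₂.1.eigenvalues i)
    (θ : ℝ)
    (hθ : Real.cos θ = sSup {t : ℝ | ∃ x ∈ L₁, ∃ y ∈ L₂,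
      ‖x‖ = 1 ∧ ‖y‖ = 1 ∧ t = ‖(inner ℂ x y : ℂ)‖}) :
    (A₁ + A₂ - (((v * (2 * Real.sin (θ / 2) ^ 2) : ℝ) : ℂ)) • 1).PosSemidef :=
  stmt0_general d A₁ A₂ h₁ h₂ L₁ L₂ hL₁ hL₂ v hv hev₁ hev₂ θ hθ
end

section
/- Let H = H₁ + H₂ be the sum of two Hermitian operators on a finite-dimensional Hilbert space 𝓗 = 𝓣 ⊕ 𝓣^⊥ such that 𝓣 is contained in the zero eigenspace of H₂ and every eigenvalue of H₂ restricted to 𝓣^⊥ is at least J > 2‖H₁‖. Then λ(H₁|_𝓣) − ‖H₁‖² / (J − 2‖H₁‖) ≤ λ(H) ≤ λ(H₁|_𝓣), where λ(·) denotes the smallest eigenvalue. -/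
/-! Write a unit vector as `x = u + w` with `u ∈ T`, `w ∈ Tᗮ`, so `‖u‖² + ‖w‖² = 1`. As `H₂` is
self-adjoint and kills `T`, `⟪x, H₂ x⟫ = ⟪w, H₂ w⟫ ≥ J ‖w‖²`, while bounding the cross terms by
`‖H₁‖` gives `re ⟪x, H₁ x⟫ ≥ λ_T ‖u‖² - 2 ‖H₁‖ ‖u‖ ‖w‖ - ‖H₁‖ ‖w‖²`. Minimising the resulting
quadratic in `‖w‖` gives the lower bound; the upper bound holds because `H₁ + H₂ = H₁` on `T`. -/

open scoped InnerProductSpace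

namespace ProjectionLemma

variable {E : Type*} [NormedAddCommGroup E] [InnerProductSpace ℂ E]

def rayleighValues (A : E →L[ℂ] E) (S : Submodule ℂ E) : Set ℝ :=
  {r | ∃ x ∈ S, ‖x‖ = 1 ∧ r = (⟪x, A x⟫_ℂ).re}

lemma abs_re_inner_apply_le (A : E →L[ℂ] E) (a b : E) :
    |(⟪a, A b⟫_ℂ).re| ≤ ‖A‖ * ‖a‖ * ‖b‖ :=
  calc |(⟪a, A b⟫_ℂ).re| ≤ ‖a‖ * ‖A b‖ :=
        (Complex.abs_re_le_norm _).trans (norm_inner_le_norm _ _)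
    _ ≤ ‖a‖ * (‖A‖ * ‖b‖) := by gcongr; exact A.le_opNorm b
    _ = ‖A‖ * ‖a‖ * ‖b‖ := by ring

lemma re_inner_smul_apply_smul (A : E →L[ℂ] E) (r : ℝ) (u : E) :
    (⟪(r : ℂ) • u, A ((r : ℂ) • u)⟫_ℂ).re = r ^ 2 * (⟪u, A u⟫_ℂ).re := by
  rw [map_smul, inner_smul_left, inner_smul_right, Complex.conj_ofReal, ← mul_assoc,
    ← Complex.ofReal_mul, Complex.re_ofReal_mul, sq]

lemma mul_norm_sq_le_re_inner_apply {A : E →L[ℂ] E} {S : Submodule ℂ E} {c : ℝ}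
    (h : ∀ v ∈ S, ‖v‖ = 1 → c ≤ (⟪v, A v⟫_ℂ).re) {u : E} (hu : u ∈ S) :
    c * ‖u‖ ^ 2 ≤ (⟪u, A u⟫_ℂ).re := by
  rcases eq_or_ne u 0 with rfl | hu0
  · simp
  have hv := h (((‖u‖⁻¹ : ℝ) : ℂ) • u) (S.smul_mem _ hu) (by simp [norm_smul, hu0])
  rwa [re_inner_smul_apply_smul, inv_pow, inv_mul_eq_div, le_div_iff₀ (by positivity)] at hv

lemma inner_add_apply_add_of_mem_ker [CompleteSpace E] {A : E →L[ℂ] E} (hA : IsSelfAdjoint A)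
    {u w : E} (hu : A u = 0) : ⟪u + w, A (u + w)⟫_ℂ = ⟪w, A w⟫_ℂ := by
  have hAu : ⟪u, A w⟫_ℂ = 0 := by
    have := hA.isSymmetric u w
    simp only [ContinuousLinearMap.coe_coe, hu, inner_zero_left] at this
    exact this.symm
  rw [map_add, hu, zero_add, inner_add_left, hAu, zero_add]

lemma re_inner_add_apply_add_ge (A : E →L[ℂ] E) (u w : E) :
    (⟪u, A u⟫_ℂ).re - 2 * ‖A‖ * ‖u‖ * ‖w‖ - ‖A‖ * ‖w‖ ^ 2 ≤ (⟪u + w, A (u + w)⟫_ℂ).re := by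
  have huw := (abs_le.mp (abs_re_inner_apply_le A u w)).1
  have hwu := (abs_le.mp (abs_re_inner_apply_le A w u)).1
  have hww := (abs_le.mp (abs_re_inner_apply_le A w w)).1
  simp only [map_add, inner_add_left, inner_add_right, Complex.add_re]
  nlinarith

lemma sub_sq_div_le_of_sq_add_sq_eq_one {lam K J a b : ℝ} (hK : 0 ≤ K) (hlam : lam ≤ K)
    (hJ : 2 * K < J) (hab : b ^ 2 + a ^ 2 = 1) (ha : 0 ≤ a) (hb : 0 ≤ b) :
    lam - K ^ 2 / (J - 2 * K) ≤ lam * b ^ 2 - 2 * K * b * a - K * a ^ 2 + J * a ^ 2 := by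
  have hgap : 0 < J - 2 * K := by linarith
  have hb1 : b ≤ 1 := by nlinarith
  have hquad : -(K ^ 2 / (J - 2 * K)) ≤ (J - 2 * K) * a ^ 2 - 2 * K * a := by
    rw [← neg_div, div_le_iff₀ hgap]
    nlinarith [sq_nonneg ((J - 2 * K) * a - K)]
  nlinarith [mul_nonneg (sub_nonneg.mpr hlam) (sq_nonneg a),
    mul_nonneg (mul_nonneg hK ha) (sub_nonneg.mpr hb1)]

lemma sub_sq_div_le_re_inner_add_apply [CompleteSpace E] {H₁ H₂ : E →L[ℂ] E}
    (hH₂ : IsSelfAdjoint H₂) {T : Submodule ℂ E} [T.HasOrthogonalProjection]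
    (hker : ∀ x ∈ T, H₂ x = 0) {lam J : ℝ}
    (hlam : ∀ x ∈ T, ‖x‖ = 1 → lam ≤ (⟪x, H₁ x⟫_ℂ).re) (hlamK : lam ≤ ‖H₁‖)
    (hJ : 2 * ‖H₁‖ < J) (hgap : ∀ x ∈ Tᗮ, ‖x‖ = 1 → J ≤ (⟪x, H₂ x⟫_ℂ).re)
    {x : E} (hx : ‖x‖ = 1) :
    lam - ‖H₁‖ ^ 2 / (J - 2 * ‖H₁‖) ≤ (⟪x, (H₁ + H₂) x⟫_ℂ).re := by
  obtain ⟨u, hu, w, hw, rfl⟩ := T.exists_add_mem_mem_orthogonal x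
  have hpyth : ‖u‖ ^ 2 + ‖w‖ ^ 2 = 1 := by
    rw [← one_pow 2, ← hx, sq, sq, sq, norm_add_sq_eq_norm_sq_add_norm_sq_of_inner_eq_zero u w
      (Submodule.inner_right_of_mem_orthogonal hu hw)]
  have h₁ := re_inner_add_apply_add_ge H₁ u w
  have hu₁ := mul_norm_sq_le_re_inner_apply hlam hu
  have hw₂ := mul_norm_sq_le_re_inner_apply hgap hw
  calc lam - ‖H₁‖ ^ 2 / (J - 2 * ‖H₁‖)
      ≤ lam * ‖u‖ ^ 2 - 2 * ‖H₁‖ * ‖u‖ * ‖w‖ - ‖H₁‖ * ‖w‖ ^ 2 + J * ‖w‖ ^ 2 :=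
        sub_sq_div_le_of_sq_add_sq_eq_one (norm_nonneg _) hlamK hJ hpyth (norm_nonneg _)
          (norm_nonneg _)
    _ ≤ (⟪u + w, H₁ (u + w)⟫_ℂ).re + (⟪w, H₂ w⟫_ℂ).re := by linarith
    _ = (⟪u + w, (H₁ + H₂) (u + w)⟫_ℂ).re := by
        rw [add_apply, inner_add_right, Complex.add_re,
          inner_add_apply_add_of_mem_ker hH₂ (hker u hu)]

lemma rayleighValues_top (A : E →L[ℂ] E) :
    rayleighValues A ⊤ = {r | ∃ x : E, ‖x‖ = 1 ∧ r = (⟪x, A x⟫_ℂ).re} := by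
  simp [rayleighValues]

lemma bddBelow_rayleighValues (A : E →L[ℂ] E) (S : Submodule ℂ E) :
    BddBelow (rayleighValues A S) := by
  refine ⟨-‖A‖, ?_⟩
  rintro r ⟨x, -, hx, rfl⟩
  simpa [hx] using (abs_le.mp (abs_re_inner_apply_le A x x)).1

lemma rayleighValues_nonempty (A : E →L[ℂ] E) {S : Submodule ℂ E} (hS : S ≠ ⊥) :
    (rayleighValues A S).Nonempty := by
  obtain ⟨y, hy, hy0⟩ := (Submodule.ne_bot_iff S).mp hS
  exact ⟨_, _, S.smul_mem _ hy, norm_smul_inv_norm (𝕜 := ℂ) hy0, rfl⟩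

lemma sInf_rayleighValues_le {A : E →L[ℂ] E} {S : Submodule ℂ E} {x : E} (hxS : x ∈ S)
    (hx : ‖x‖ = 1) : sInf (rayleighValues A S) ≤ (⟪x, A x⟫_ℂ).re :=
  csInf_le (bddBelow_rayleighValues A S) ⟨x, hxS, hx, rfl⟩

lemma sInf_rayleighValues_le_norm (A : E →L[ℂ] E) {S : Submodule ℂ E} (hS : S ≠ ⊥) :
    sInf (rayleighValues A S) ≤ ‖A‖ := by
  obtain ⟨r, x, hxS, hx, rfl⟩ := rayleighValues_nonempty A hS
  calc sInf (rayleighValues A S) ≤ (⟪x, A x⟫_ℂ).re := sInf_rayleighValues_le hxS hx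
    _ ≤ ‖A‖ := by simpa [hx] using (abs_le.mp (abs_re_inner_apply_le A x x)).2

end ProjectionLemma

open ProjectionLemma in
theorem stmt1_general (d : ℕ)
    (H₁ H₂ : EuclideanSpace ℂ (Fin d) →L[ℂ] EuclideanSpace ℂ (Fin d))
    (hH₂ : IsSelfAdjoint H₂)
    (T : Submodule ℂ (EuclideanSpace ℂ (Fin d))) (hT : T ≠ ⊥)
    (hker : ∀ x ∈ T, H₂ x = 0)
    (J : ℝ) (hJ : 2 * ‖H₁‖ < J)
    (hgap : ∀ x ∈ Tᗮ, ‖x‖ = 1 → J ≤ (inner ℂ x (H₂ x) : ℂ).re)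
    (lamH lamT : ℝ)
    (hlamH : lamH = sInf {r : ℝ | ∃ x : EuclideanSpace ℂ (Fin d),
      ‖x‖ = 1 ∧ r = (inner ℂ x ((H₁ + H₂) x) : ℂ).re})
    (hlamT : lamT = sInf {r : ℝ | ∃ x ∈ T,
      ‖x‖ = 1 ∧ r = (inner ℂ x (H₁ x) : ℂ).re}) :
    lamT - ‖H₁‖ ^ 2 / (J - 2 * ‖H₁‖) ≤ lamH ∧ lamH ≤ lamT := by
  rw [← rayleighValues_top] at hlamH
  change lamT = sInf (rayleighValues H₁ T) at hlamT
  subst hlamH hlamT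
  have hsub : rayleighValues H₁ T ⊆ rayleighValues (H₁ + H₂) ⊤ := by
    rintro r ⟨x, hxT, hx, rfl⟩
    exact ⟨x, trivial, hx, by rw [add_apply, hker x hxT, add_zero]⟩
  have hlow : ∀ r ∈ rayleighValues (H₁ + H₂) ⊤,
      sInf (rayleighValues H₁ T) - ‖H₁‖ ^ 2 / (J - 2 * ‖H₁‖) ≤ r := by
    rintro r ⟨x, -, hx, rfl⟩
    exact sub_sq_div_le_re_inner_add_apply hH₂ hker (fun _ ↦ sInf_rayleighValues_le)
      (sInf_rayleighValues_le_norm H₁ hT) hJ hgap hx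
  have hne := rayleighValues_nonempty H₁ hT
  exact ⟨le_csInf (hne.mono hsub) hlow, csInf_le_csInf ⟨_, hlow⟩ hne hsub⟩

/-- Projection Lemma (Kempe–Kitaev–Regev). -/
theorem stmt1 (d : ℕ) (hd : 0 < d)
    (H₁ H₂ : EuclideanSpace ℂ (Fin d) →L[ℂ] EuclideanSpace ℂ (Fin d))
    (hH₁ : IsSelfAdjoint H₁) (hH₂ : IsSelfAdjoint H₂)
    (T : Submodule ℂ (EuclideanSpace ℂ (Fin d))) (hT : T ≠ ⊥)
    (hker : ∀ x ∈ T, H₂ x = 0)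
    (J : ℝ) (hJ : 2 * ‖H₁‖ < J)
    (hgap : ∀ x ∈ Tᗮ, ‖x‖ = 1 → J ≤ (inner ℂ x (H₂ x) : ℂ).re)
    (lamH lamT : ℝ)
    (hlamH : lamH = sInf {r : ℝ | ∃ x : EuclideanSpace ℂ (Fin d),
      ‖x‖ = 1 ∧ r = (inner ℂ x ((H₁ + H₂) x) : ℂ).re})
    (hlamT : lamT = sInf {r : ℝ | ∃ x ∈ T,
      ‖x‖ = 1 ∧ r = (inner ℂ x (H₁ x) : ℂ).re}) :
    lamT - ‖H₁‖ ^ 2 / (J - 2 * ‖H₁‖) ≤ lamH ∧ lamH ≤ lamT :=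
  stmt1_general d H₁ H₂ hH₂ T hT hker J hJ hgap lamH lamT hlamH hlamT
end
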